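/- Let r ≥ 1, m1,…,mr ≥ 1, m = m1+⋯+mr, γ = γ_{m1,…,mr}, π a partition of [m], and let A ≠ B be blocks of π that are adjacent in the elementarization graph of π. If the edge {A,B} is a bridge of the elementarization graph (deleting it increases the number of connected components), then for every 1 ≤ j ≤ r, #{u ∈ C_j : [γ(u)]_π = A and [u]_π = B} = #{u ∈ C_j : [γ(u)]_π = B and [u]_π = A}; in particular, for each j the number of u ∈ C_j with {[γ(u)]_π, [u]_π} = {A,B} is even. -/

import Mathlib

open Equiv

namespace WignerPaper

/-- The setoid (partition) of the orbits of a permutation. -/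
def orbitSetoid {α : Type*} (σ : Equiv.Perm α) : Setoid α :=
  ⟨σ.SameCycle,
    ⟨fun x => Equiv.Perm.SameCycle.refl σ x, fun h => h.symm, fun h h' => h.trans h'⟩⟩

/-- The number of blocks of a partition. -/
noncomputable def numBlocks {α : Type*} (s : Setoid α) : ℕ := Nat.card (Quotient s)

/-- The number of orbits of a permutation (fixed points count as orbits). -/
noncomputable def numOrbits {α : Type*} (σ : Equiv.Perm α) : ℕ :=
  numBlocks (orbitSetoid σ)

/-- The length `|U| = n − #(U)` of a partition of `Fin n`, as an integer. -/
noncomputable def setoidLength {n : ℕ} (s : Setoid (Fin n)) : ℤ :=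
  (n : ℤ) - numBlocks s

/-- The length `|σ| = n − #(σ)` of a permutation of `Fin n`, as an integer. -/
noncomputable def permLength {n : ℕ} (σ : Equiv.Perm (Fin n)) : ℤ :=
  (n : ℤ) - numOrbits σ

/-- A pairing is a fixed-point free involution. -/
def IsPairing {α : Type*} (σ : Equiv.Perm α) : Prop := σ * σ = 1 ∧ ∀ x, σ x ≠ x

/-- The `j`-th cycle (0-indexed) of `γ_{m1,…,mr}`, as a set. -/
def cyc (ms : List ℕ) (j : ℕ) : Set (Fin ms.sum) :=
  {u | (ms.take j).sum ≤ (u : ℕ) ∧ (u : ℕ) < (ms.take (j + 1)).sum}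

/-- The permutation `γ_{m1,…,mr}` with the `r` cycles
`(1,…,m1)(m1+1,…,m1+m2)⋯(m1+⋯+m_{r−1}+1,…,m)` (here 0-indexed on `Fin (m1+⋯+mr)`). -/
def annularPerm (ms : List ℕ) : Equiv.Perm (Fin ms.sum) :=
  ((List.range ms.length).map fun j =>
    ((List.finRange ms.sum).filter fun u : Fin ms.sum =>
      decide ((ms.take j).sum ≤ (u : ℕ) ∧ (u : ℕ) < (ms.take (j + 1)).sum)).formPerm).prod

/-- The annular non-crossing pairings `NC₂(m1,…,mr)`: pairings `σ` with
`0_σ ∨ 0_γ = 1_m` and `#(σ) + #(σ⁻¹γ) = m + 2 − r`. -/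
def NC2ann (ms : List ℕ) : Set (Equiv.Perm (Fin ms.sum)) :=
  {σ | IsPairing σ ∧ orbitSetoid σ ⊔ orbitSetoid (annularPerm ms) = ⊤ ∧
    numOrbits σ + numOrbits (σ⁻¹ * annularPerm ms) + ms.length = ms.sum + 2}

/-- `|NC₂(n)|`, with the convention `|NC₂(0)| = 1`. -/
noncomputable def NC2card (n : ℕ) : ℕ :=
  if n = 0 then 1 else Nat.card ↥(NC2ann [n])

/-- The partition `π̄`: `u ∼ v` iff the edges `e_u = ([γu]_π, [u]_π)` and
`e_v = ([γv]_π, [v]_π)` join the same unordered pair of blocks of `π`. -/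
def ebar {α : Type*} (γ : Equiv.Perm α) (π : Setoid α) : Setoid α :=
  Setoid.ker fun u => Sym2.mk (Quotient.mk π (γ u)) (Quotient.mk π u)

/-- The edges `e_u` and `e_v` have opposite orientation:
`[u]_π = [γv]_π` and `[v]_π = [γu]_π`. -/
def OppOr {α : Type*} (γ : Equiv.Perm α) (π : Setoid α) (u v : α) : Prop :=
  π.r u (γ v) ∧ π.r v (γ u)

/-- The block of `π̄` containing `u` is exactly `{u, v}`, with `u ≠ v`. -/
def TwinBlock {α : Type*} (γ : Equiv.Perm α) (π : Setoid α) (u v : α) : Prop :=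
  u ≠ v ∧ (ebar γ π).r u v ∧ ∀ w, (ebar γ π).r u w → w = u ∨ w = v

/-- The elementarization graph: the simple graph on the blocks of `π` where distinct
blocks `A`, `B` are adjacent iff some edge `e_u` joins `A` and `B`. -/
def elemGraph {α : Type*} (γ : Equiv.Perm α) (π : Setoid α) : SimpleGraph (Quotient π) where
  Adj A B := A ≠ B ∧ ∃ u,
    (Quotient.mk π (γ u) = A ∧ Quotient.mk π u = B) ∨
    (Quotient.mk π (γ u) = B ∧ Quotient.mk π u = A)
  symm := ⟨by
    rintro A B ⟨hne, u, h⟩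
    exact ⟨hne.symm, u, h.symm⟩⟩
  loopless := ⟨by rintro A ⟨hne, -⟩; exact hne rfl⟩

/-- The smallest partition in which `u` and `v` lie in the same block. -/
def pairSetoid {α : Type*} (u v : α) : Setoid α :=
  sInf {s : Setoid α | s.r u v}

/-- Merge the block of `u` and the block of `v` in the partition `s`. -/
def mergeTwo {α : Type*} (s : Setoid α) (u v : α) : Setoid α := s ⊔ pairSetoid u v

/-- `z` and `z'` lie in a common cycle of `γ_{m1,…,mr}`. -/
def SameCycIdx (ms : List ℕ) (z z' : Fin ms.sum) : Prop :=
  ∃ j, j < ms.length ∧ z ∈ cyc ms j ∧ z' ∈ cyc ms j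

/-- The restriction of `π` to the single-cycle subset `C` is a non-crossing pairing. -/
def RestrictNC2Disc {m : ℕ} (γ π : Equiv.Perm (Fin m)) (C : Set (Fin m)) : Prop :=
  ∃ hπ : ∀ u, u ∈ C ↔ π u ∈ C,
    IsPairing (π.subtypePerm (fun u => (hπ u).symm)) ∧
    ∃ hγ : ∀ u, u ∈ C ↔ γ u ∈ C,
      numOrbits (π.subtypePerm (fun u => (hπ u).symm)) +
        numOrbits ((π.subtypePerm (fun u => (hπ u).symm))⁻¹ * γ.subtypePerm (fun u => (hγ u).symm)) = Nat.card C + 1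

/-- The restriction of `π` to the two-cycle subset `C` is an annular non-crossing pairing. -/
def RestrictNC2Ann {m : ℕ} (γ π : Equiv.Perm (Fin m)) (C : Set (Fin m)) : Prop :=
  ∃ hπ : ∀ u, u ∈ C ↔ π u ∈ C,
    IsPairing (π.subtypePerm (fun u => (hπ u).symm)) ∧
    ∃ hγ : ∀ u, u ∈ C ↔ γ u ∈ C,
      orbitSetoid (π.subtypePerm (fun u => (hπ u).symm)) ⊔ orbitSetoid (γ.subtypePerm (fun u => (hγ u).symm)) = ⊤ ∧
      numOrbits (π.subtypePerm (fun u => (hπ u).symm)) +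
        numOrbits ((π.subtypePerm (fun u => (hπ u).symm))⁻¹ * γ.subtypePerm (fun u => (hγ u).symm)) = Nat.card C

/-- The restriction of `π` to the single-cycle subset `C` is a non-crossing involution
with exactly one fixed point. -/
def RestrictNCOneFix {m : ℕ} (γ π : Equiv.Perm (Fin m)) (C : Set (Fin m)) : Prop :=
  ∃ hπ : ∀ u, u ∈ C ↔ π u ∈ C,
    (π.subtypePerm (fun u => (hπ u).symm)) * (π.subtypePerm (fun u => (hπ u).symm)) = 1 ∧
    (∃! u : C, (π.subtypePerm (fun u => (hπ u).symm)) u = u) ∧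
    ∃ hγ : ∀ u, u ∈ C ↔ γ u ∈ C,
      numOrbits (π.subtypePerm (fun u => (hπ u).symm)) +
        numOrbits ((π.subtypePerm (fun u => (hπ u).symm))⁻¹ * γ.subtypePerm (fun u => (hγ u).symm)) = Nat.card C + 1

/-- `PS^{(1,1,1)}_{NC₂}(m1,m2,m3)`: pairs `(V,π)` where `π` restricts to a non-crossing
pairing on each cycle and `V` merges one block of each of the three restrictions. -/
def PS111 (m1 m2 m3 : ℕ) :
    Set (Setoid (Fin ([m1, m2, m3] : List ℕ).sum) ×
         Equiv.Perm (Fin ([m1, m2, m3] : List ℕ).sum)) :=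
  {Vπ | IsPairing Vπ.2 ∧
    (∀ j, j < 3 → RestrictNC2Disc (annularPerm [m1, m2, m3]) Vπ.2 (cyc [m1, m2, m3] j)) ∧
    ∃ u1 ∈ cyc [m1, m2, m3] 0, ∃ u2 ∈ cyc [m1, m2, m3] 1, ∃ u3 ∈ cyc [m1, m2, m3] 2,
      Vπ.1 = mergeTwo (mergeTwo (orbitSetoid Vπ.2) u1 u2) u2 u3}

/-- `PS^{(2,1,1)}_{NC₂}(m1,m2,m3)`: pairs `(V,π)` where `π` restricts to a non-crossing
pairing on each cycle and `V` merges two disjoint pairs of blocks of `π`, each pair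
lying inside two different cycles, with `V ∨ 0_γ = 1_m`. -/
def PS211 (m1 m2 m3 : ℕ) :
    Set (Setoid (Fin ([m1, m2, m3] : List ℕ).sum) ×
         Equiv.Perm (Fin ([m1, m2, m3] : List ℕ).sum)) :=
  {Vπ | IsPairing Vπ.2 ∧
    (∀ j, j < 3 → RestrictNC2Disc (annularPerm [m1, m2, m3]) Vπ.2 (cyc [m1, m2, m3] j)) ∧
    ∃ u1 v1 u2 v2,
      (∃ j j', j < 3 ∧ j' < 3 ∧ j ≠ j' ∧ u1 ∈ cyc [m1, m2, m3] j ∧ v1 ∈ cyc [m1, m2, m3] j') ∧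
      (∃ j j', j < 3 ∧ j' < 3 ∧ j ≠ j' ∧ u2 ∈ cyc [m1, m2, m3] j ∧ v2 ∈ cyc [m1, m2, m3] j') ∧
      ¬ (orbitSetoid Vπ.2).r u1 u2 ∧ ¬ (orbitSetoid Vπ.2).r u1 v2 ∧
      ¬ (orbitSetoid Vπ.2).r v1 u2 ∧ ¬ (orbitSetoid Vπ.2).r v1 v2 ∧
      Vπ.1 = mergeTwo (mergeTwo (orbitSetoid Vπ.2) u1 v1) u2 v2 ∧
      Vπ.1 ⊔ orbitSetoid (annularPerm [m1, m2, m3]) = ⊤}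

/-- `PS^{(1,1)}_{NC₂}(m1,m2,m3)`: pairs `(V,π)` where `π` restricts to an annular
non-crossing pairing on a union of two cycles and a non-crossing pairing on the third,
and `V` merges one block of each of the two restrictions. -/
def PS11 (m1 m2 m3 : ℕ) :
    Set (Setoid (Fin ([m1, m2, m3] : List ℕ).sum) ×
         Equiv.Perm (Fin ([m1, m2, m3] : List ℕ).sum)) :=
  {Vπ | ∃ i1 i2 i3 : ℕ, i1 < 3 ∧ i2 < 3 ∧ i3 < 3 ∧ i1 ≠ i2 ∧ i1 ≠ i3 ∧ i2 ≠ i3 ∧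
    IsPairing Vπ.2 ∧
    RestrictNC2Ann (annularPerm [m1, m2, m3]) Vπ.2
      (cyc [m1, m2, m3] i1 ∪ cyc [m1, m2, m3] i2) ∧
    RestrictNC2Disc (annularPerm [m1, m2, m3]) Vπ.2 (cyc [m1, m2, m3] i3) ∧
    ∃ u ∈ cyc [m1, m2, m3] i1 ∪ cyc [m1, m2, m3] i2, ∃ v ∈ cyc [m1, m2, m3] i3,
      Vπ.1 = mergeTwo (orbitSetoid Vπ.2) u v}

/-- `PS^{(1,1)}_{NC₂^{(2)}}(m1,m2,m3)`: elements of `PS^{(1,1)}_{NC₂}` whose annular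
part has exactly two through strings. -/
def PS11TwoTS (m1 m2 m3 : ℕ) :
    Set (Setoid (Fin ([m1, m2, m3] : List ℕ).sum) ×
         Equiv.Perm (Fin ([m1, m2, m3] : List ℕ).sum)) :=
  {Vπ | ∃ i1 i2 i3 : ℕ, i1 < 3 ∧ i2 < 3 ∧ i3 < 3 ∧ i1 ≠ i2 ∧ i1 ≠ i3 ∧ i2 ≠ i3 ∧
    IsPairing Vπ.2 ∧
    RestrictNC2Ann (annularPerm [m1, m2, m3]) Vπ.2
      (cyc [m1, m2, m3] i1 ∪ cyc [m1, m2, m3] i2) ∧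
    RestrictNC2Disc (annularPerm [m1, m2, m3]) Vπ.2 (cyc [m1, m2, m3] i3) ∧
    Nat.card {w : Fin ([m1, m2, m3] : List ℕ).sum //
      w ∈ cyc [m1, m2, m3] i1 ∧ Vπ.2 w ∈ cyc [m1, m2, m3] i2} = 2 ∧
    ∃ u ∈ cyc [m1, m2, m3] i1 ∪ cyc [m1, m2, m3] i2, ∃ v ∈ cyc [m1, m2, m3] i3,
      Vπ.1 = mergeTwo (orbitSetoid Vπ.2) u v}

/-- `PS^{(1,1)(t)}_{NC₂}(m1,m2,m3)`: elements of `PS^{(1,1)}_{NC₂}` whose annular part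
has exactly one through string, the merged block of `V` consisting of that through
string together with a block of the disc part. -/
def PS11t (m1 m2 m3 : ℕ) :
    Set (Setoid (Fin ([m1, m2, m3] : List ℕ).sum) ×
         Equiv.Perm (Fin ([m1, m2, m3] : List ℕ).sum)) :=
  {Vπ | ∃ i1 i2 i3 : ℕ, i1 < 3 ∧ i2 < 3 ∧ i3 < 3 ∧ i1 ≠ i2 ∧ i1 ≠ i3 ∧ i2 ≠ i3 ∧
    IsPairing Vπ.2 ∧
    RestrictNC2Ann (annularPerm [m1, m2, m3]) Vπ.2
      (cyc [m1, m2, m3] i1 ∪ cyc [m1, m2, m3] i2) ∧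
    RestrictNC2Disc (annularPerm [m1, m2, m3]) Vπ.2 (cyc [m1, m2, m3] i3) ∧
    Nat.card {w : Fin ([m1, m2, m3] : List ℕ).sum //
      w ∈ cyc [m1, m2, m3] i1 ∧ Vπ.2 w ∈ cyc [m1, m2, m3] i2} = 1 ∧
    ∃ u, u ∈ cyc [m1, m2, m3] i1 ∧ Vπ.2 u ∈ cyc [m1, m2, m3] i2 ∧
      ∃ v ∈ cyc [m1, m2, m3] i3, Vπ.1 = mergeTwo (orbitSetoid Vπ.2) u v}

/-- `PS^{(1,1,1)}_{NC_{2,1,1}}(m1,m2,m3)`: pairs `(V,π)` where `π` is an involution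
restricting to a non-crossing involution with exactly one fixed point on two of the
cycles and a non-crossing pairing on the third, and `V` merges the two fixed points
together with one block of the pairing part into a single block. -/
def PS111Loop (m1 m2 m3 : ℕ) :
    Set (Setoid (Fin ([m1, m2, m3] : List ℕ).sum) ×
         Equiv.Perm (Fin ([m1, m2, m3] : List ℕ).sum)) :=
  {Vπ | ∃ i1 i2 i3 : ℕ, i1 < 3 ∧ i2 < 3 ∧ i3 < 3 ∧ i1 ≠ i2 ∧ i1 ≠ i3 ∧ i2 ≠ i3 ∧
    Vπ.2 * Vπ.2 = 1 ∧
    RestrictNCOneFix (annularPerm [m1, m2, m3]) Vπ.2 (cyc [m1, m2, m3] i1) ∧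
    RestrictNCOneFix (annularPerm [m1, m2, m3]) Vπ.2 (cyc [m1, m2, m3] i2) ∧
    RestrictNC2Disc (annularPerm [m1, m2, m3]) Vπ.2 (cyc [m1, m2, m3] i3) ∧
    ∃ f1 ∈ cyc [m1, m2, m3] i1, Vπ.2 f1 = f1 ∧
      ∃ f2 ∈ cyc [m1, m2, m3] i2, Vπ.2 f2 = f2 ∧
        ∃ w ∈ cyc [m1, m2, m3] i3,
          Vπ.1 = mergeTwo (mergeTwo (orbitSetoid Vπ.2) f1 f2) f2 w}

/-- `π` is a double tree partition: no loops, every block of `π̄` consists of exactly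
two elements whose edges have opposite orientation, and the elementarization graph
is a tree. -/
def IsDoubleTree {α : Type*} (γ : Equiv.Perm α) (π : Setoid α) : Prop :=
  (∀ u, ¬ π.r (γ u) u) ∧
  (∀ u, ∃ v, TwinBlock γ π u v ∧ OppOr γ π u v) ∧
  (elemGraph γ π).IsTree

/-- `π` is a double uniloop partition: exactly two elements `u ≠ v` have loop edges,
these lie at the same vertex, every other block of `π̄` consists of exactly two
elements whose edges are non-loops of opposite orientation, and the elementarization
graph is a tree. -/
def IsDoubleUniloop {α : Type*} (γ : Equiv.Perm α) (π : Setoid α) : Prop :=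
  (∃ u v, u ≠ v ∧ π.r (γ u) u ∧ π.r (γ v) v ∧ π.r u v ∧
    (∀ w, π.r (γ w) w → w = u ∨ w = v) ∧
    (∀ w, w ≠ u → w ≠ v → ∃ w', TwinBlock γ π w w' ∧
      ¬ π.r (γ w) w ∧ ¬ π.r (γ w') w' ∧ OppOr γ π w w')) ∧
  (elemGraph γ π).IsTree

/-- `π` is of 2-6 tree type. -/
def Is26TreeType (m1 m2 m3 : ℕ) (π : Setoid (Fin ([m1, m2, m3] : List ℕ).sum)) : Prop :=
  (∀ u, ¬ π.r (annularPerm [m1, m2, m3] u) u) ∧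
  (∃ u1 u2 v1 v2 w1 w2 : Fin ([m1, m2, m3] : List ℕ).sum,
    u1 ≠ u2 ∧ v1 ≠ v2 ∧ w1 ≠ w2 ∧
    u1 ∈ cyc [m1, m2, m3] 0 ∧ u2 ∈ cyc [m1, m2, m3] 0 ∧
    v1 ∈ cyc [m1, m2, m3] 1 ∧ v2 ∈ cyc [m1, m2, m3] 1 ∧
    w1 ∈ cyc [m1, m2, m3] 2 ∧ w2 ∈ cyc [m1, m2, m3] 2 ∧
    (ebar (annularPerm [m1, m2, m3]) π).r u1 u2 ∧
    (ebar (annularPerm [m1, m2, m3]) π).r u1 v1 ∧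
    (ebar (annularPerm [m1, m2, m3]) π).r u1 v2 ∧
    (ebar (annularPerm [m1, m2, m3]) π).r u1 w1 ∧
    (ebar (annularPerm [m1, m2, m3]) π).r u1 w2 ∧
    (∀ z, (ebar (annularPerm [m1, m2, m3]) π).r u1 z →
      z = u1 ∨ z = u2 ∨ z = v1 ∨ z = v2 ∨ z = w1 ∨ z = w2) ∧
    OppOr (annularPerm [m1, m2, m3]) π u1 u2 ∧
    OppOr (annularPerm [m1, m2, m3]) π v1 v2 ∧
    OppOr (annularPerm [m1, m2, m3]) π w1 w2 ∧
    (∀ z, z ≠ u1 → z ≠ u2 → z ≠ v1 → z ≠ v2 → z ≠ w1 → z ≠ w2 →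
      ∃ z', TwinBlock (annularPerm [m1, m2, m3]) π z z' ∧
        SameCycIdx [m1, m2, m3] z z' ∧ OppOr (annularPerm [m1, m2, m3]) π z z')) ∧
  (elemGraph (annularPerm [m1, m2, m3]) π).IsTree

/-- `π` is of 2-4-4 tree type. -/
def Is244TreeType (m1 m2 m3 : ℕ) (π : Setoid (Fin ([m1, m2, m3] : List ℕ).sum)) : Prop :=
  (∀ u, ¬ π.r (annularPerm [m1, m2, m3] u) u) ∧
  (∃ (a b c d : ℕ) (u1 u2 v1 v2 u3 u4 v3 v4 : Fin ([m1, m2, m3] : List ℕ).sum),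
    a < 3 ∧ b < 3 ∧ a ≠ b ∧ c < 3 ∧ d < 3 ∧ c ≠ d ∧
    u1 ≠ u2 ∧ v1 ≠ v2 ∧ u3 ≠ u4 ∧ v3 ≠ v4 ∧
    u1 ∈ cyc [m1, m2, m3] a ∧ u2 ∈ cyc [m1, m2, m3] a ∧
    v1 ∈ cyc [m1, m2, m3] b ∧ v2 ∈ cyc [m1, m2, m3] b ∧
    u3 ∈ cyc [m1, m2, m3] c ∧ u4 ∈ cyc [m1, m2, m3] c ∧
    v3 ∈ cyc [m1, m2, m3] d ∧ v4 ∈ cyc [m1, m2, m3] d ∧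
    (ebar (annularPerm [m1, m2, m3]) π).r u1 u2 ∧
    (ebar (annularPerm [m1, m2, m3]) π).r u1 v1 ∧
    (ebar (annularPerm [m1, m2, m3]) π).r u1 v2 ∧
    (∀ z, (ebar (annularPerm [m1, m2, m3]) π).r u1 z →
      z = u1 ∨ z = u2 ∨ z = v1 ∨ z = v2) ∧
    (ebar (annularPerm [m1, m2, m3]) π).r u3 u4 ∧
    (ebar (annularPerm [m1, m2, m3]) π).r u3 v3 ∧
    (ebar (annularPerm [m1, m2, m3]) π).r u3 v4 ∧
    (∀ z, (ebar (annularPerm [m1, m2, m3]) π).r u3 z →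
      z = u3 ∨ z = u4 ∨ z = v3 ∨ z = v4) ∧
    ¬ (ebar (annularPerm [m1, m2, m3]) π).r u1 u3 ∧
    OppOr (annularPerm [m1, m2, m3]) π u1 u2 ∧
    OppOr (annularPerm [m1, m2, m3]) π v1 v2 ∧
    OppOr (annularPerm [m1, m2, m3]) π u3 u4 ∧
    OppOr (annularPerm [m1, m2, m3]) π v3 v4 ∧
    (∀ z, z ≠ u1 → z ≠ u2 → z ≠ v1 → z ≠ v2 → z ≠ u3 → z ≠ u4 → z ≠ v3 → z ≠ v4 →
      ∃ z', TwinBlock (annularPerm [m1, m2, m3]) π z z' ∧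
        SameCycIdx [m1, m2, m3] z z' ∧ OppOr (annularPerm [m1, m2, m3]) π z z')) ∧
  (ebar (annularPerm [m1, m2, m3]) π ⊔ orbitSetoid (annularPerm [m1, m2, m3]) = ⊤) ∧
  (elemGraph (annularPerm [m1, m2, m3]) π).IsTree

/-- The transposition exchanging the two entries of an unordered pair. -/
def sym2Swap {α : Type*} [DecidableEq α] : Sym2 α → Equiv.Perm α :=
  Sym2.lift ⟨fun a b => Equiv.swap a b, fun a b => Equiv.swap_comm a b⟩

section Aux

lemma takeSum_mono (ms : List ℕ) : Monotone fun k => (ms.take k).sum := by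
  refine monotone_nat_of_le_succ fun n => ?_
  rw [List.take_succ, List.sum_append]
  exact Nat.le_add_right _ _

lemma cyc_disjoint {ms : List ℕ} {i j : ℕ} (hij : i ≠ j) {u : Fin ms.sum}
    (hi : u ∈ cyc ms i) (hj : u ∈ cyc ms j) : False := by
  obtain ⟨hi1, hi2⟩ := hi
  obtain ⟨hj1, hj2⟩ := hj
  rcases Nat.lt_or_ge i j with h | h
  · exact absurd (lt_of_lt_of_le hi2 (takeSum_mono ms h)) (not_lt.mpr hj1)
  · have h' : j < i := lt_of_le_of_ne h (Ne.symm hij)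
    exact absurd (lt_of_lt_of_le hj2 (takeSum_mono ms h')) (not_lt.mpr hi1)

lemma mem_cyc_filter_iff {ms : List ℕ} {i : ℕ} {z : Fin ms.sum} :
    z ∈ ((List.finRange ms.sum).filter fun u : Fin ms.sum =>
      decide ((ms.take i).sum ≤ (u : ℕ) ∧ (u : ℕ) < (ms.take (i + 1)).sum)) ↔
    z ∈ cyc ms i := by
  simp [List.mem_filter, cyc]

lemma annularPerm_mem_cyc {ms : List ℕ} {j : ℕ} {u : Fin ms.sum}
    (hu : u ∈ cyc ms j) : annularPerm ms u ∈ cyc ms j := by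
  have step : ∀ (i : ℕ) (y : Fin ms.sum), y ∈ cyc ms j →
      (((List.finRange ms.sum).filter fun u : Fin ms.sum =>
        decide ((ms.take i).sum ≤ (u : ℕ) ∧ (u : ℕ) < (ms.take (i + 1)).sum)).formPerm y)
        ∈ cyc ms j := by
    intro i y hy
    by_cases hij : i = j
    · subst hij
      exact mem_cyc_filter_iff.mp
        (List.formPerm_apply_mem_of_mem (mem_cyc_filter_iff.mpr hy))
    · rw [List.formPerm_apply_of_notMem]
      · exact hy
      · intro hmem
        exact cyc_disjoint hij (mem_cyc_filter_iff.mp hmem) hy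
  rw [annularPerm]
  have key : ∀ l : List ℕ, ∀ x : Fin ms.sum, x ∈ cyc ms j →
      ((l.map fun i =>
        ((List.finRange ms.sum).filter fun u : Fin ms.sum =>
          decide ((ms.take i).sum ≤ (u : ℕ) ∧
            (u : ℕ) < (ms.take (i + 1)).sum)).formPerm).prod) x ∈ cyc ms j := by
    intro l
    induction l with
    | nil => intro x hx; simpa using hx
    | cons i l ih =>
      intro x hx
      rw [List.map_cons, List.prod_cons, Equiv.Perm.mul_apply]
      exact step i _ (ih x hx)
  exact key _ u hu

end Aux

/-- across a bridge of the elementarization graph, each basic cycle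
contributes the same number of edges in each orientation. -/
theorem statement5 (ms : List ℕ) (hr : 1 ≤ ms.length) (hms : ∀ a ∈ ms, 1 ≤ a)
    (γ : Equiv.Perm (Fin ms.sum)) (hγ : γ = annularPerm ms)
    (π : Setoid (Fin ms.sum)) (A B : Quotient π) (hAB : A ≠ B)
    (hadj : (elemGraph γ π).Adj A B)
    (hbridge : (elemGraph γ π).IsBridge (Sym2.mk A B)) :
    ∀ j, j < ms.length →
      Nat.card {u : Fin ms.sum //
        u ∈ cyc ms j ∧ Quotient.mk π (γ u) = A ∧ Quotient.mk π u = B} =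
      Nat.card {u : Fin ms.sum //
        u ∈ cyc ms j ∧ Quotient.mk π (γ u) = B ∧ Quotient.mk π u = A} ∧
      Even (Nat.card {u : Fin ms.sum // u ∈ cyc ms j ∧
        ((Quotient.mk π (γ u) = A ∧ Quotient.mk π u = B) ∨
         (Quotient.mk π (γ u) = B ∧ Quotient.mk π u = A))}) := by
  classical
  intro j hj
  have hginv : ∀ u : Fin ms.sum, u ∈ cyc ms j → γ u ∈ cyc ms j := by
    intro u hu; rw [hγ]; exact annularPerm_mem_cyc hu
  set G := elemGraph γ π with hG
  set G' := G \ SimpleGraph.fromEdgeSet {Sym2.mk A B} with hG'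
  have hnot : ¬ G'.Reachable A B := SimpleGraph.isBridge_iff.mp hbridge
  set f : Fin ms.sum → ℤ :=
    fun u => if G'.Reachable A (Quotient.mk π u) then 1 else 0 with hf
  set pP : Fin ms.sum → Prop :=
    fun u => Quotient.mk π (γ u) = A ∧ Quotient.mk π u = B with hpP
  set pQ : Fin ms.sum → Prop :=
    fun u => Quotient.mk π (γ u) = B ∧ Quotient.mk π u = A with hpQ
  have hstep : ∀ u : Fin ms.sum,
      f (γ u) - f u = (if pP u then (1:ℤ) else 0) - (if pQ u then (1:ℤ) else 0) := by
    intro u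
    by_cases h1 : pP u
    · have h2 : ¬ pQ u := by
        rintro ⟨hA, -⟩; exact hAB (h1.1.symm.trans hA)
      rw [if_pos h1, if_neg h2, hf]
      simp only [h1.1, h1.2]
      rw [if_pos (SimpleGraph.Reachable.refl A), if_neg hnot]
    · by_cases h2 : pQ u
      · rw [if_neg h1, if_pos h2, hf]
        simp only [h2.1, h2.2]
        rw [if_neg hnot, if_pos (SimpleGraph.Reachable.refl A)]
      · rw [if_neg h1, if_neg h2, sub_self]
        by_cases heq : Quotient.mk π (γ u) = Quotient.mk π u
        · rw [hf]; simp only [heq]; exact sub_self _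
        · have hadj' : G'.Adj (Quotient.mk π (γ u)) (Quotient.mk π u) := by
            rw [hG', SimpleGraph.sdiff_adj, SimpleGraph.fromEdgeSet_adj]
            refine ⟨⟨heq, u, Or.inl ⟨rfl, rfl⟩⟩, ?_⟩
            rintro ⟨hmem, -⟩
            rw [Set.mem_singleton_iff] at hmem
            rcases Sym2.eq_iff.mp hmem with ⟨ha, hb⟩ | ⟨ha, hb⟩
            · exact h1 ⟨ha, hb⟩
            · exact h2 ⟨ha, hb⟩
          have hiff : G'.Reachable A (Quotient.mk π (γ u)) ↔
              G'.Reachable A (Quotient.mk π u) :=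
            ⟨fun h => h.trans hadj'.reachable, fun h => h.trans hadj'.symm.reachable⟩
          rw [hf]
          simp only [hiff]
          exact sub_self _
  set C : Finset (Fin ms.sum) := Finset.univ.filter (fun u => u ∈ cyc ms j) with hC
  have hmemC : ∀ u : Fin ms.sum, u ∈ C ↔ u ∈ cyc ms j := by
    intro u; simp [hC]
  have himg : C.image γ = C := by
    apply Finset.eq_of_subset_of_card_le
    · intro v hv
      rw [Finset.mem_image] at hv
      obtain ⟨u, hu, rfl⟩ := hv
      exact (hmemC _).mpr (hginv u ((hmemC _).mp hu))
    · rw [Finset.card_image_of_injective _ γ.injective]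
  have hsum : ∑ u ∈ C, f (γ u) = ∑ u ∈ C, f u := by
    calc ∑ u ∈ C, f (γ u) = ∑ v ∈ C.image γ, f v :=
          (Finset.sum_image (fun a _ b _ h => γ.injective h)).symm
      _ = ∑ u ∈ C, f u := by rw [himg]
  have hzero : ∑ u ∈ C, ((if pP u then (1:ℤ) else 0) - (if pQ u then (1:ℤ) else 0)) = 0 := by
    rw [← Finset.sum_congr rfl (fun u _ => hstep u)]
    rw [Finset.sum_sub_distrib, hsum, sub_self]
  rw [Finset.sum_sub_distrib, Finset.sum_boole, Finset.sum_boole, sub_eq_zero] at hzero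
  have hcardPQ : (C.filter pP).card = (C.filter pQ).card := by
    exact_mod_cast hzero
  have hcard : ∀ (p : Fin ms.sum → Prop) [DecidablePred p],
      Nat.card {u : Fin ms.sum // u ∈ cyc ms j ∧ p u} = (C.filter p).card := by
    intro p hp
    rw [Nat.card_eq_fintype_card, Fintype.card_subtype]
    congr 1
    ext u
    simp [hC, Finset.mem_filter]
  have hdisj : Disjoint (C.filter pP) (C.filter pQ) := by
    rw [Finset.disjoint_left]
    intro a haP haQ
    rw [Finset.mem_filter] at haP haQ
    exact hAB (haP.2.1.symm.trans haQ.2.1)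
  constructor
  · rw [hcard, hcard]
    exact hcardPQ
  · rw [hcard]
    have hunion : (C.filter fun u => (Quotient.mk π (γ u) = A ∧ Quotient.mk π u = B) ∨
        (Quotient.mk π (γ u) = B ∧ Quotient.mk π u = A)) = C.filter pP ∪ C.filter pQ := by
      ext x
      simp only [Finset.mem_filter, Finset.mem_union, hpP, hpQ]
      tauto
    rw [hunion, Finset.card_union_of_disjoint hdisj, hcardPQ]
    exact ⟨(C.filter pQ).card, rfl⟩

end WignerPaper
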